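/- arXiv:1907.00053 — 8 statements merged into one kernel-verified Lean document; each statement's English description precedes it below -/
import Mathlib

section
/- In a chemical reaction network, if state d is straight-line reachable from state a via flux vector u2, and state c is straight-line reachable from d via flux vector u1, where u1 is independent of u2, then c is straight-line reachable from a via the flux vector u1 + u2. -/
/-! Independence means `u2` neither consumes nor produces any species that `u1` consumes, so
those species have the same amounts in `d` as in `a`; hence every reaction fired by `u1` is
already applicable at `a`. The net changes of `u1` and `u2` add by linearity of the
stoichiometry map. -/

/-- A flux vector `u` is applicable at state `c` if every reaction with positive
flux has all of its reactants present (positive concentration) in `c`. -/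
def Applicable {σ ρ : Type} (react : ρ → σ → ℕ) (u : ρ → ℝ) (c : σ → ℝ) : Prop :=
  ∀ r, 0 < u r → ∀ s, 0 < react r s → 0 < c s

/-- Net change of species `s` caused by applying flux vector `u`
(the stoichiometry matrix applied to `u`). -/
noncomputable def StoichAct {σ ρ : Type} [Fintype ρ] (react prod : ρ → σ → ℕ)
    (u : ρ → ℝ) (s : σ) : ℝ :=
  ∑ r, u r * ((prod r s : ℝ) - (react r s : ℝ))

/-- State `d` is straight-line reachable from `c` via flux vector `u`. -/
def SLReach {σ ρ : Type} [Fintype ρ] (react prod : ρ → σ → ℕ)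
    (u : ρ → ℝ) (c d : σ → ℝ) : Prop :=
  (∀ r, 0 ≤ u r) ∧ Applicable react u c ∧ (∀ s, 0 ≤ d s) ∧
    ∀ s, d s = c s + StoichAct react prod u s

/-- Flux vector `u` consumes species `s`. -/
def Consumes {σ ρ : Type} (react : ρ → σ → ℕ) (u : ρ → ℝ) (s : σ) : Prop :=
  ∃ r, 0 < u r ∧ 0 < react r s

/-- Flux vector `u` produces species `s`. -/
def Produces {σ ρ : Type} (prod : ρ → σ → ℕ) (u : ρ → ℝ) (s : σ) : Prop :=
  ∃ r, 0 < u r ∧ 0 < prod r s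

/-- `u1` is independent of `u2`: `u1` consumes no species produced or consumed by `u2`. -/
def Independent {σ ρ : Type} (react prod : ρ → σ → ℕ) (u1 u2 : ρ → ℝ) : Prop :=
  ∀ s, Consumes react u1 s → ¬ Consumes react u2 s ∧ ¬ Produces prod u2 s

/-- Reachability: a finite sequence of straight-line segments. -/
def Reach {σ ρ : Type} [Fintype ρ] (react prod : ρ → σ → ℕ) (c d : σ → ℝ) : Prop :=
  Relation.ReflTransGen (fun x y => ∃ u, SLReach react prod u x y) c d

theorem stoichAct_add {σ ρ : Type} [Fintype ρ] (react prod : ρ → σ → ℕ) (u v : ρ → ℝ) (s : σ) :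
    StoichAct react prod (u + v) s = StoichAct react prod u s + StoichAct react prod v s := by
  simp only [StoichAct, Pi.add_apply, add_mul, Finset.sum_add_distrib]

theorem stoichAct_eq_zero_of_not_consumes_of_not_produces {σ ρ : Type} [Fintype ρ]
    {react prod : ρ → σ → ℕ} {u : ρ → ℝ} {s : σ} (hu : ∀ r, 0 ≤ u r)
    (hcons : ¬ Consumes react u s) (hprod : ¬ Produces prod u s) :
    StoichAct react prod u s = 0 := by
  refine Finset.sum_eq_zero fun r _ => ?_
  rcases (hu r).eq_or_lt with hr | hr
  · rw [← hr, zero_mul]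
  · have hreact : react r s = 0 := Nat.eq_zero_of_not_pos fun h => hcons ⟨r, hr, h⟩
    have hprod : prod r s = 0 := Nat.eq_zero_of_not_pos fun h => hprod ⟨r, hr, h⟩
    simp [hreact, hprod]

theorem SLReach.apply_eq_of_not_consumes_of_not_produces {σ ρ : Type} [Fintype ρ]
    {react prod : ρ → σ → ℕ} {u : ρ → ℝ} {a d : σ → ℝ} {s : σ}
    (h : SLReach react prod u a d) (hcons : ¬ Consumes react u s)
    (hprod : ¬ Produces prod u s) : d s = a s := by
  rw [h.2.2.2 s, stoichAct_eq_zero_of_not_consumes_of_not_produces h.1 hcons hprod, add_zero]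

theorem Applicable.add {σ ρ : Type} {react : ρ → σ → ℕ} {u v : ρ → ℝ} {a d : σ → ℝ}
    (hu : Applicable react u d) (hv : Applicable react v a)
    (hda : ∀ s, Consumes react u s → d s = a s) : Applicable react (u + v) a := by
  intro r hr s hs
  by_cases hvr : 0 < v r
  · exact hv r hvr s hs
  · have hur : 0 < u r := by simp only [Pi.add_apply] at hr; linarith
    rw [← hda s ⟨r, hur, hs⟩]
    exact hu r hur s hs

theorem slreach_combine_general {σ ρ : Type} [Fintype ρ] (react prod : ρ → σ → ℕ)
    (u1 u2 : ρ → ℝ) (a d c : σ → ℝ)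
    (h2 : SLReach react prod u2 a d) (h1 : SLReach react prod u1 d c)
    (hind : Independent react prod u1 u2) :
    SLReach react prod (u1 + u2) a c := by
  have hda : ∀ s, Consumes react u1 s → d s = a s := fun s hs =>
    h2.apply_eq_of_not_consumes_of_not_produces (hind s hs).1 (hind s hs).2
  obtain ⟨hn2, hap2, -, heq2⟩ := h2
  obtain ⟨hn1, hap1, hc, heq1⟩ := h1
  refine ⟨fun r => add_nonneg (hn1 r) (hn2 r), hap1.add hap2 hda, hc, fun s => ?_⟩
  rw [stoichAct_add, heq1, heq2]
  ring

/-- If `d` is straight-line reachable from `a` via `u2`, and `c` is straight-line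
reachable from `d` via `u1`, where `u1` is independent of `u2`, then `c` is
straight-line reachable from `a` via `u1 + u2`. -/
theorem slreach_combine {σ ρ : Type} [Fintype ρ] (react prod : ρ → σ → ℕ)
    (u1 u2 : ρ → ℝ) (a d c : σ → ℝ) (ha : ∀ s, 0 ≤ a s)
    (h2 : SLReach react prod u2 a d) (h1 : SLReach react prod u1 d c)
    (hind : Independent react prod u1 u2) :
    SLReach react prod (u1 + u2) a c :=
  slreach_combine_general react prod u1 u2 a d c h2 h1 hind
end

section
/- In a chemical reaction network, for any scalar \gamma \geq 0 and state c, the set of states reachable from \gamma c equals \gamma times the set of states reachable from c, i.e., Post(\gamma c) = \gamma Post(c). -/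
/-!
For `γ > 0`, scaling a state does not change which species are present, so a flux `u`
applicable at `c` gives the applicable flux `γ • u` at `γ • c`, and the stoichiometric
change is linear in the flux; hence every segment `c → d` scales to `γ • c → γ • d`, and
scaling back by `γ⁻¹` gives the reverse inclusion. For `γ = 0`, since every reaction has a
reactant, only the zero flux is applicable at the zero state, so `0` reaches only `0`.
-/

section

variable {σ ρ : Type} [Fintype ρ] {react prod : ρ → σ → ℕ}

theorem stoichAct_smul (γ : ℝ) (u : ρ → ℝ) (s : σ) :
    StoichAct react prod (γ • u) s = γ * StoichAct react prod u s := by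
  simp only [StoichAct, Pi.smul_apply, smul_eq_mul, Finset.mul_sum, mul_assoc]

omit [Fintype ρ] in
theorem Applicable.smul {γ : ℝ} (hγ : 0 < γ) {u : ρ → ℝ} {c : σ → ℝ}
    (h : Applicable react u c) : Applicable react (γ • u) (γ • c) := by
  intro r hr s hs
  rw [Pi.smul_apply, smul_eq_mul, mul_pos_iff_of_pos_left hγ] at hr
  exact mul_pos hγ (h r hr s hs)

theorem SLReach.smul {γ : ℝ} (hγ : 0 < γ) {u : ρ → ℝ} {c d : σ → ℝ}
    (h : SLReach react prod u c d) : SLReach react prod (γ • u) (γ • c) (γ • d) := by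
  obtain ⟨hu, happ, hd, heq⟩ := h
  refine ⟨fun r => mul_nonneg hγ.le (hu r), happ.smul hγ,
    fun s => mul_nonneg hγ.le (hd s), fun s => ?_⟩
  simp only [Pi.smul_apply, smul_eq_mul, stoichAct_smul, heq s, mul_add]

theorem Reach.smul {γ : ℝ} (hγ : 0 < γ) {c d : σ → ℝ} (h : Reach react prod c d) :
    Reach react prod (γ • c) (γ • d) := by
  induction h with
  | refl => exact .refl
  | tail _ hstep ih =>
    obtain ⟨u, hu⟩ := hstep
    exact ih.tail ⟨γ • u, hu.smul hγ⟩

theorem reach_smul_iff {γ : ℝ} (hγ : 0 < γ) {c d : σ → ℝ} :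
    Reach react prod (γ • c) d ↔ Reach react prod c (γ⁻¹ • d) := by
  refine ⟨fun h => ?_, fun h => ?_⟩
  · simpa only [smul_smul, inv_mul_cancel₀ hγ.ne', one_smul] using h.smul (inv_pos.2 hγ)
  · simpa only [smul_smul, mul_inv_cancel₀ hγ.ne', one_smul] using h.smul hγ

omit [Fintype ρ] in
theorem Applicable.eq_zero_of_zero (hreact : ∀ r, ∃ s, 0 < react r s) {u : ρ → ℝ}
    (hu : ∀ r, 0 ≤ u r) (h : Applicable react u 0) : u = 0 := by
  funext r
  refine ((hu r).eq_or_lt.resolve_right fun hr => ?_).symm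
  obtain ⟨s, hs⟩ := hreact r
  exact lt_irrefl _ (h r hr s hs)

theorem Reach.eq_zero_of_zero (hreact : ∀ r, ∃ s, 0 < react r s) {d : σ → ℝ}
    (h : Reach react prod 0 d) : d = 0 := by
  induction h with
  | refl => rfl
  | tail _ hstep ih =>
    subst ih
    obtain ⟨u, hu, happ, -, heq⟩ := hstep
    obtain rfl := happ.eq_zero_of_zero hreact hu
    funext s
    simp [heq s, StoichAct]

end

theorem post_smul_general {σ ρ : Type} [Fintype ρ] (react prod : ρ → σ → ℕ)
    (hreact : ∀ r, ∃ s, 0 < react r s)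
    (γ : ℝ) (hγ : 0 ≤ γ) (c : σ → ℝ) :
    {d | Reach react prod (γ • c) d} = (fun d => γ • d) '' {d | Reach react prod c d} := by
  rw [Set.image_smul]
  rcases hγ.eq_or_lt with rfl | hpos
  · rw [Set.zero_smul_set (s := {d | Reach react prod c d}) ⟨c, .refl⟩, zero_smul]
    ext d
    exact ⟨Reach.eq_zero_of_zero hreact, fun hd => hd ▸ .refl⟩
  · ext d
    rw [Set.mem_smul_set_iff_inv_smul_mem₀ hpos.ne']
    exact reach_smul_iff hpos

/-- `Post(γ c) = γ Post(c)` for any scalar `γ ≥ 0`, assuming every reaction has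
at least one reactant. -/
theorem post_smul {σ ρ : Type} [Fintype ρ] (react prod : ρ → σ → ℕ)
    (hreact : ∀ r, ∃ s, 0 < react r s)
    (γ : ℝ) (hγ : 0 ≤ γ) (c : σ → ℝ) (hc : ∀ s, 0 ≤ c s) :
    {d | Reach react prod (γ • c) d} = (fun d => γ • d) '' {d | Reach react prod c d} :=
  post_smul_general react prod hreact γ hγ c
end

section
/- For any state c of a CRN and any species S, if the concentration of S is bounded above over all states reachable from c, then there exists a state d reachable from c such that for every state a reachable from d, a(S) \leq d(S). -/
/-! Choose a state `c₁` reachable from `c` at which every species that can ever become present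
is already present. From `c₁` no reaction becomes applicable that was not applicable at `c₁`, so
the fluxes of consecutive segments add up: every state reachable from `c₁` is `c₁ + N u` for a
single flux `u` in the polyhedron of fluxes applicable at `c₁` that keep all concentrations
nonnegative. The concentration of `S` is a linear functional of `u`, bounded above on this
polyhedron, so it attains its maximum there: by Fourier–Motzkin elimination the image of a
polyhedron under a linear functional is again a polyhedron, hence closed. -/

open Set Pointwise

lemma exists_between_of_finite {α : Type*} [LinearOrder α] [Nonempty α] {L U : Set α}
    (hL : L.Finite) (hU : U.Finite) (h : ∀ l ∈ L, ∀ u ∈ U, l ≤ u) :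
    ∃ t, (∀ l ∈ L, l ≤ t) ∧ ∀ u ∈ U, t ≤ u := by
  rcases L.eq_empty_or_nonempty with rfl | hL₀
  · rcases U.eq_empty_or_nonempty with rfl | hU₀
    · simp
    · obtain ⟨u₀, hu₀, hmin⟩ := exists_min_image U id hU hU₀
      exact ⟨u₀, by simp, hmin⟩
  · obtain ⟨l₀, hl₀, hmax⟩ := exists_max_image L id hL hL₀
    exact ⟨l₀, hmax, h l₀ hl₀⟩

section Polyhedron

variable {𝕜 : Type*} [Field 𝕜] [LinearOrder 𝕜]

/-- Fourier–Motzkin elimination of a single variable. -/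
lemma exists_forall_add_mul_le_iff [IsStrictOrderedRing 𝕜] {α : Type*} {H : Set α}
    (hH : H.Finite) (a c β : α → 𝕜) :
    (∃ t, ∀ h ∈ H, a h + t * c h ≤ β h) ↔
      (∀ h ∈ H, c h = 0 → a h ≤ β h) ∧
        ∀ p ∈ H, 0 < c p → ∀ q ∈ H, c q < 0 →
          -c q * a p + c p * a q ≤ -c q * β p + c p * β q := by
  constructor
  · rintro ⟨t, ht⟩
    refine ⟨fun h hh hc => by simpa [hc] using ht h hh, fun p hp hcp q hq hcq => ?_⟩
    have hp' := mul_le_mul_of_nonneg_left (ht p hp) (neg_nonneg.2 hcq.le)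
    have hq' := mul_le_mul_of_nonneg_left (ht q hq) hcp.le
    linear_combination hp' + hq'
  · rintro ⟨hzero, hpair⟩
    obtain ⟨t, hlow, hupp⟩ := exists_between_of_finite
      ((hH.sep (c · < 0)).image fun q => (a q - β q) / -c q)
      ((hH.sep (0 < c ·)).image fun p => (β p - a p) / c p) (by
        simp only [forall_mem_image]
        rintro q ⟨hq, hcq⟩ p ⟨hp, hcp⟩
        rw [div_le_div_iff₀ (neg_pos.2 hcq) hcp]
        linarith [hpair p hp hcp q hq hcq])
    simp only [forall_mem_image] at hlow hupp
    refine ⟨t, fun h hh => ?_⟩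
    rcases lt_trichotomy (c h) 0 with hneg | hz | hpos
    · have := (div_le_iff₀ (neg_pos.2 hneg)).1 (hlow ⟨hh, hneg⟩)
      linarith
    · simpa [hz] using hzero h hh hz
    · have := (le_div_iff₀ hpos).1 (hupp ⟨hh, hpos⟩)
      linarith

variable (𝕜) in
def IsPolyhedron {E : Type*} [AddCommGroup E] [Module 𝕜 E] (T : Set E) : Prop :=
  ∃ H : Set (Module.Dual 𝕜 E × 𝕜), H.Finite ∧ T = {x | ∀ h ∈ H, h.1 x ≤ h.2}

variable {E F : Type*} [AddCommGroup E] [Module 𝕜 E] [AddCommGroup F] [Module 𝕜 F]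

lemma isPolyhedron_setOf_forall_le {κ : Type*} [Finite κ] (φ : κ → Module.Dual 𝕜 E)
    (β : κ → 𝕜) : IsPolyhedron 𝕜 {x | ∀ i, φ i x ≤ β i} :=
  ⟨range fun i => (φ i, β i), finite_range _, by simp⟩

namespace IsPolyhedron

variable {T T' : Set E}

lemma inter (hT : IsPolyhedron 𝕜 T) (hT' : IsPolyhedron 𝕜 T') : IsPolyhedron 𝕜 (T ∩ T') := by
  obtain ⟨H, hH, rfl⟩ := hT
  obtain ⟨H', hH', rfl⟩ := hT'
  refine ⟨H ∪ H', hH.union hH', ?_⟩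
  ext x
  simp only [mem_inter_iff, mem_ofPred_eq, mem_union, or_imp, forall_and]

lemma preimage (hT : IsPolyhedron 𝕜 T) (f : F →ₗ[𝕜] E) : IsPolyhedron 𝕜 (f ⁻¹' T) := by
  obtain ⟨H, hH, rfl⟩ := hT
  refine ⟨(fun h => (h.1 ∘ₗ f, h.2)) '' H, hH.image _, ?_⟩
  ext x
  simp only [mem_preimage, mem_ofPred_eq, forall_mem_image, LinearMap.comp_apply]

lemma setOf_exists_add_smul_mem [IsStrictOrderedRing 𝕜] (hT : IsPolyhedron 𝕜 T) (v : E) :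
    IsPolyhedron 𝕜 {x | ∃ t : 𝕜, x + t • v ∈ T} := by
  obtain ⟨H, hH, rfl⟩ := hT
  let c : Module.Dual 𝕜 E × 𝕜 → 𝕜 := fun h => h.1 v
  refine ⟨{h ∈ H | c h = 0} ∪ image2 (fun p q => (-c q • p.1 + c p • q.1, -c q * p.2 + c p * q.2))
    {p ∈ H | 0 < c p} {q ∈ H | c q < 0}, (hH.sep _).union ((hH.sep _).image2 _ (hH.sep _)), ?_⟩
  ext x
  simp only [mem_ofPred_eq, map_add, map_smul, smul_eq_mul]
  rw [exists_forall_add_mul_le_iff hH]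
  simp only [mem_union, or_imp, forall_and, forall_mem_image2, mem_sep_iff, and_imp,
    LinearMap.add_apply, LinearMap.smul_apply, smul_eq_mul, c]

lemma add_span_singleton [IsStrictOrderedRing 𝕜] (hT : IsPolyhedron 𝕜 T) (v : E) :
    IsPolyhedron 𝕜 (T + (𝕜 ∙ v : Set E)) := by
  convert hT.setOf_exists_add_smul_mem v using 1
  ext x
  simp only [mem_add, SetLike.mem_coe, Submodule.mem_span_singleton, mem_ofPred_eq]
  constructor
  · rintro ⟨y, hy, _, ⟨a, rfl⟩, rfl⟩
    exact ⟨-a, by simpa⟩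
  · rintro ⟨t, ht⟩
    exact ⟨_, ht, -t • v, ⟨-t, rfl⟩, by simp⟩

lemma add_submodule [IsStrictOrderedRing 𝕜] (hT : IsPolyhedron 𝕜 T) {W : Submodule 𝕜 E}
    (hW : W.FG) : IsPolyhedron 𝕜 (T + (W : Set E)) := by
  induction W, hW using Submodule.fg_induction generalizing T with
  | singleton v => exact hT.add_span_singleton v
  | sup W₁ W₂ _ _ ih₁ ih₂ =>
    rw [Submodule.coe_sup, ← add_assoc]
    exact ih₂ (ih₁ hT)

lemma image [IsStrictOrderedRing 𝕜] [FiniteDimensional 𝕜 E] (hT : IsPolyhedron 𝕜 T)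
    {φ : Module.Dual 𝕜 E} (hφ : φ ≠ 0) : IsPolyhedron 𝕜 (φ '' T) := by
  obtain ⟨w, hw⟩ : ∃ w, φ w ≠ 0 := by
    by_contra! h
    exact hφ (LinearMap.ext h)
  set v := (φ w)⁻¹ • w
  have hv : φ v = 1 := by simp [v, hw]
  -- `r ∈ φ '' T ↔ r • v ∈ T + ker φ`
  convert (hT.add_submodule (Submodule.FG.of_finite (N := LinearMap.ker φ))).preimage
    (LinearMap.toSpanSingleton 𝕜 E v) using 1
  ext r
  simp only [mem_image, mem_preimage, LinearMap.toSpanSingleton_apply, mem_add, SetLike.mem_coe,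
    LinearMap.mem_ker]
  constructor
  · rintro ⟨x, hx, rfl⟩
    exact ⟨x, hx, φ x • v - x, by simp [hv], by abel⟩
  · rintro ⟨x, hx, k, hk, hxk⟩
    refine ⟨x, hx, ?_⟩
    simpa [hk, hv] using congrArg φ hxk

end IsPolyhedron

end Polyhedron

namespace IsPolyhedron

lemma isClosed {E : Type*} [NormedAddCommGroup E] [NormedSpace ℝ E] [FiniteDimensional ℝ E]
    {T : Set E} (hT : IsPolyhedron ℝ T) : IsClosed T := by
  obtain ⟨H, -, rfl⟩ := hT
  simp only [ofPred_forall]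
  exact isClosed_biInter fun h _ => isClosed_le h.1.continuous_of_finiteDimensional continuous_const

lemma exists_isMaxOn {E : Type*} [AddCommGroup E] [Module ℝ E] [FiniteDimensional ℝ E]
    {T : Set E} (hT : IsPolyhedron ℝ T) (hne : T.Nonempty) (φ : Module.Dual ℝ E)
    (hbdd : BddAbove (φ '' T)) : ∃ x ∈ T, IsMaxOn φ T x := by
  by_cases hφ : φ = 0
  · obtain ⟨x, hx⟩ := hne
    exact ⟨x, hx, fun y _ => by simp [hφ]⟩
  obtain ⟨x, hx, hmax⟩ := (hT.image hφ).isClosed.csSup_mem (hne.image φ) hbdd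
  exact ⟨x, hx, fun y hy => hmax ▸ le_csSup hbdd (mem_image_of_mem φ hy)⟩

end IsPolyhedron

section ReactionNetwork

variable {σ ρ : Type} [Fintype ρ] {react prod : ρ → σ → ℕ}

variable (react prod) in
noncomputable def stoichMap : (ρ → ℝ) →ₗ[ℝ] σ → ℝ where
  toFun u := StoichAct react prod u
  map_add' u v := by ext s; simp [StoichAct, add_mul, Finset.sum_add_distrib]
  map_smul' t u := by ext s; simp [StoichAct, Finset.mul_sum, mul_assoc]

lemma stoichMap_apply (u : ρ → ℝ) (s : σ) :
    stoichMap react prod u s = StoichAct react prod u s := rfl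

lemma SLReach.eq_add_stoichMap {u : ρ → ℝ} {c d : σ → ℝ} (h : SLReach react prod u c d) :
    d = c + stoichMap react prod u :=
  funext h.2.2.2

lemma SLReach.reach {u : ρ → ℝ} {c d : σ → ℝ} (h : SLReach react prod u c d) :
    Reach react prod c d :=
  .single ⟨u, h⟩

lemma SLReach.add_smul {u : ρ → ℝ} {c d z : σ → ℝ} (h : SLReach react prod u c d) {t : ℝ}
    (ht : 0 < t) (hz : ∀ s, 0 ≤ z s) :
    SLReach react prod (t • u) (z + t • c) (z + t • d) := by
  obtain rfl := h.eq_add_stoichMap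
  obtain ⟨hu, happ, hd, -⟩ := h
  refine ⟨fun r => mul_nonneg ht.le (hu r), fun r hr s hs => ?_,
    fun s => add_nonneg (hz s) (mul_nonneg ht.le (hd s)), fun s => ?_⟩
  · have hur : 0 < u r := pos_of_mul_pos_right hr ht.le
    exact add_pos_of_nonneg_of_pos (hz s) (mul_pos ht (happ r hur s hs))
  · simp only [← stoichMap_apply, map_smul, Pi.add_apply, Pi.smul_apply, smul_eq_mul]
    ring

lemma Reach.nonneg {c d : σ → ℝ} (h : Reach react prod c d) (hc : ∀ s, 0 ≤ c s) :
    ∀ s, 0 ≤ d s := by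
  induction h with
  | refl => exact hc
  | tail _ hstep _ => exact hstep.choose_spec.2.2.1

lemma Reach.add_smul {c d z : σ → ℝ} (h : Reach react prod c d) {t : ℝ} (ht : 0 < t)
    (hz : ∀ s, 0 ≤ z s) : Reach react prod (z + t • c) (z + t • d) :=
  Relation.ReflTransGen.lift (fun x => z + t • x)
    (fun _ _ ⟨u, hu⟩ => ⟨t • u, hu.add_smul ht hz⟩) _ _ h

lemma Reach.combo {c d e : σ → ℝ} (hd : Reach react prod c d) (he : Reach react prod c e)
    (hc : ∀ s, 0 ≤ c s) {a b : ℝ} (ha : 0 < a) (hb : 0 < b) (hab : a + b = 1) :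
    Reach react prod c (a • d + b • e) := by
  have h₁ := hd.add_smul (z := b • c) ha fun s => mul_nonneg hb.le (hc s)
  have h₂ := he.add_smul (z := a • d) hb fun s => mul_nonneg ha.le (hd.nonneg hc s)
  rw [add_comm, Convex.combo_self hab] at h₁
  rw [add_comm] at h₂
  exact h₁.trans h₂

variable (react prod) in
/-- In the paper's notation, `[c] = P(c)`. -/
def HasMaxSupport (c : σ → ℝ) : Prop :=
  ∀ d, Reach react prod c d → ∀ s, 0 < d s → 0 < c s

variable (react prod) in
lemma exists_reach_hasMaxSupport [Finite σ] {c : σ → ℝ} (hc : ∀ s, 0 ≤ c s) :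
    ∃ c₁, Reach react prod c c₁ ∧ HasMaxSupport react prod c₁ := by
  classical
  cases nonempty_fintype σ
  suffices h : ∀ t : Finset σ, ∃ c₁, Reach react prod c c₁ ∧
      ∀ d, Reach react prod c d → ∀ s ∈ t, 0 < d s → 0 < c₁ s by
    obtain ⟨c₁, hc₁, hmax⟩ := h Finset.univ
    exact ⟨c₁, hc₁, fun d hd s => hmax d (hc₁.trans hd) s (Finset.mem_univ s)⟩
  intro t
  induction t using Finset.induction_on with
  | empty => exact ⟨c, .refl, by simp⟩
  | insert s t _ ih =>
    obtain ⟨c₁, hc₁, hmax⟩ := ih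
    by_cases hs : ∃ d, Reach react prod c d ∧ 0 < d s
    · obtain ⟨d, hd, hds⟩ := hs
      refine ⟨(1 / 2 : ℝ) • c₁ + (1 / 2 : ℝ) • d,
        hc₁.combo hd hc (by norm_num) (by norm_num) (by norm_num), fun e he s' hs' hes' => ?_⟩
      have := hc₁.nonneg hc s'
      have := hd.nonneg hc s'
      simp only [Pi.add_apply, Pi.smul_apply, smul_eq_mul]
      rcases Finset.mem_insert.1 hs' with rfl | hs'
      · linarith
      · linarith [hmax e he s' hs' hes']
    · refine ⟨c₁, hc₁, fun e he s' hs' hes' => ?_⟩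
      rcases Finset.mem_insert.1 hs' with rfl | hs'
      · exact absurd ⟨e, he, hes'⟩ hs
      · exact hmax e he s' hs' hes'

lemma HasMaxSupport.exists_slReach {c d : σ → ℝ} (hmax : HasMaxSupport react prod c)
    (hc : ∀ s, 0 ≤ c s) (hd : Reach react prod c d) : ∃ u, SLReach react prod u c d := by
  induction hd with
  | refl => exact ⟨0, fun _ => le_rfl, fun r hr => (lt_irrefl _ hr).elim, hc, by simp [StoichAct]⟩
  | @tail y z hy hstep ih =>
    obtain ⟨u, hu, happ, -, huy⟩ := ih
    obtain ⟨v, hv, hvapp, hz, hvz⟩ := hstep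
    refine ⟨u + v, fun r => add_nonneg (hu r) (hv r), fun r hr s hs => ?_, hz, fun s => ?_⟩
    · rcases lt_or_ge 0 (u r) with hur | hur
      · exact happ r hur s hs
      · have hvr : 0 < v r := by simp only [Pi.add_apply] at hr; linarith
        exact hmax y hy s (hvapp r hvr s hs)
    · simp only [← stoichMap_apply, map_add, Pi.add_apply] at huy hvz ⊢
      rw [hvz, huy]
      ring

variable (react prod) in
lemma isPolyhedron_setOf_slReach [Finite σ] (c : σ → ℝ) :
    IsPolyhedron ℝ {u | SLReach react prod u c (c + stoichMap react prod u)} := by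
  have hflux := isPolyhedron_setOf_forall_le
    (fun r : ρ => -(LinearMap.proj r : Module.Dual ℝ (ρ → ℝ))) fun _ => 0
  have happ := isPolyhedron_setOf_forall_le
    (fun r : {r // ¬ ∀ s, 0 < react r s → 0 < c s} => (LinearMap.proj r.1 : Module.Dual ℝ (ρ → ℝ)))
    fun _ => 0
  have hstate := isPolyhedron_setOf_forall_le
    (fun s : σ => -(LinearMap.proj s ∘ₗ stoichMap react prod)) c
  refine Eq.subst (motive := IsPolyhedron ℝ) ?_ ((hflux.inter happ).inter hstate)
  ext u
  simp only [SLReach, Applicable, mem_inter_iff, mem_ofPred_eq, LinearMap.neg_apply,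
    LinearMap.coe_proj, Function.eval, LinearMap.coe_comp, Function.comp_apply, Pi.add_apply,
    ← stoichMap_apply, Left.neg_nonpos_iff, Subtype.forall, not_forall, not_lt,
    forall_exists_index, implies_true, and_true]
  constructor
  · rintro ⟨⟨hu, happ⟩, hc⟩
    exact ⟨hu, fun r hr s hs => not_le.1 fun h => (happ r s hs h).not_gt hr,
      fun s => by linarith [hc s]⟩
  · rintro ⟨hu, happ, hc⟩
    exact ⟨⟨hu, fun r s hs h => not_lt.1 fun hr => (happ r hr s hs).not_ge h⟩,
      fun s => by linarith [hc s]⟩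

end ReactionNetwork

/-- If the concentration of species `S` is bounded above over all states reachable
from `c`, then there is a state `d` reachable from `c` maximizing the concentration
of `S` among all states reachable from `d`. -/
theorem exists_max_species {σ ρ : Type} [Fintype σ] [Fintype ρ]
    (react prod : ρ → σ → ℕ) (c : σ → ℝ) (hc : ∀ s, 0 ≤ c s) (S : σ) (B : ℝ)
    (hbound : ∀ d, Reach react prod c d → d S ≤ B) :
    ∃ d : σ → ℝ, Reach react prod c d ∧ ∀ a, Reach react prod d a → a S ≤ d S := by
  obtain ⟨c₁, hc₁, hmax⟩ := exists_reach_hasMaxSupport react prod hc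
  have hc₁0 := hc₁.nonneg hc
  set K := {u | SLReach react prod u c₁ (c₁ + stoichMap react prod u)}
  set φ := LinearMap.proj S ∘ₗ stoichMap react prod
  have hK : (0 : ρ → ℝ) ∈ K :=
    ⟨fun _ => le_rfl, fun r hr => (lt_irrefl _ hr).elim, by simpa using hc₁0,
      fun s => by simp [← stoichMap_apply]⟩
  have hbdd : BddAbove (φ '' K) := by
    refine ⟨B - c₁ S, forall_mem_image.2 fun u hu => ?_⟩
    have := hbound _ (hc₁.trans hu.reach)
    simp only [Pi.add_apply] at this
    simp only [φ, LinearMap.comp_apply, LinearMap.proj_apply]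
    linarith
  obtain ⟨u, hu, humax⟩ := (isPolyhedron_setOf_slReach react prod c₁).exists_isMaxOn ⟨0, hK⟩ φ hbdd
  refine ⟨c₁ + stoichMap react prod u, hc₁.trans hu.reach, fun a ha => ?_⟩
  obtain ⟨v, hv⟩ := hmax.exists_slReach hc₁0 (hu.reach.trans ha)
  obtain rfl := hv.eq_add_stoichMap
  simpa [φ] using isMaxOn_iff.1 humax v hv
end

section
/- If f : R_{\geq 0}^n \to R_{\geq 0} is superadditive and on some subset D \subseteq R_{> 0}^n that is a cone containing an open ball of positive radius f agrees with a linear function g, then f(x) \leq g(x) for all x in R_{> 0}^n. -/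
theorem exists_mem_add_mem_of_ball_subset_cone {E : Type*} [NormedAddCommGroup E]
    [NormedSpace ℝ E] {D : Set E} (hcone : ∀ x ∈ D, ∀ t : ℝ, 0 < t → t • x ∈ D)
    {x0 : E} {r : ℝ} (hr : 0 < r) (hball : Metric.ball x0 r ⊆ D) (x : E) :
    ∃ y ∈ D, x + y ∈ D := by
  set t : ℝ := (‖x‖ + 1) / r
  have ht : 0 < t := by positivity
  have hshift : x0 + t⁻¹ • x ∈ D := by
    refine hball ?_
    rw [Metric.mem_ball, dist_self_add_left, norm_smul, Real.norm_of_nonneg (inv_pos.2 ht).le,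
      inv_mul_lt_iff₀ ht, div_mul_cancel₀ _ hr.ne']
    exact lt_add_one _
  refine ⟨t • x0, hcone x0 (hball (Metric.mem_ball_self hr)) t ht, ?_⟩
  have hxy : x + t • x0 = t • (x0 + t⁻¹ • x) := by
    rw [smul_add, smul_inv_smul₀ ht.ne', add_comm]
  rw [hxy]
  exact hcone _ hshift t ht

/-- If `f` is superadditive on the nonnegative orthant and agrees with a linear
function `g` on a cone `D ⊆ ℝ_{>0}^n` containing an open ball of positive radius,
then `f x ≤ g x` for all positive `x`. -/
theorem superadditive_le_linear_on_cone (n : ℕ) (f : (Fin n → ℝ) → ℝ)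
    (g : (Fin n → ℝ) →ₗ[ℝ] ℝ) (D : Set (Fin n → ℝ))
    (hDpos : ∀ x ∈ D, ∀ i, 0 < x i)
    (hcone : ∀ x ∈ D, ∀ t : ℝ, 0 < t → t • x ∈ D)
    (hball : ∃ (x0 : Fin n → ℝ) (r : ℝ), 0 < r ∧ Metric.ball x0 r ⊆ D)
    (hsup : ∀ a b : Fin n → ℝ, (∀ i, 0 ≤ a i) → (∀ i, 0 ≤ b i) → f a + f b ≤ f (a + b))
    (hfg : ∀ x ∈ D, f x = g x) :
    ∀ x : Fin n → ℝ, (∀ i, 0 < x i) → f x ≤ g x := by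
  intro x hx
  obtain ⟨x0, r, hr, hsub⟩ := hball
  obtain ⟨y, hy, hxy⟩ := exists_mem_add_mem_of_ball_subset_cone hcone hr hsub x
  have hsup_xy := hsup x y (fun i => (hx i).le) (fun i => (hDpos y hy i).le)
  have hg_xy : f (x + y) = g x + f y := by rw [hfg _ hxy, map_add, hfg y hy]
  linarith
end

section
/- Any superadditive continuous piecewise rational linear function f : R_{>0}^n \to R_{\geq 0} equals the pointwise minimum of a finite collection of rational linear functions. -/
/-!
Along a ray the function `t ↦ f (t • x) / t` is continuous on `(0, ∞)` with values in the finite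
set `{g i x}`, hence constant: `f` is positively homogeneous. If `f` agrees with a piece `g i` on a
nonempty open set `V`, pick `y ∈ V` and `t > 0` with `y + t • x ∈ V`; superadditivity and
homogeneity give `f (t⁻¹ • y) + f x ≤ f (t⁻¹ • (y + t • x)) = g i (t⁻¹ • y) + g i x`, so
`f ≤ g i` everywhere. By Baire's theorem every nonempty open set contains a nonempty open set on
which `f` agrees with one of the pieces, so `f` is the minimum of the pieces it agrees with on
some open set.
-/

open Set Filter Topology Finset

theorem IsOpen.exists_interior_closure_inter_nonempty {X ι : Type*} [TopologicalSpace X]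
    [BaireSpace X] [Countable ι] {V : Set X} {C : ι → Set X} (hV : IsOpen V)
    (hVne : V.Nonempty) (hVC : V ⊆ ⋃ i, C i) : ∃ i, (interior (closure (C i)) ∩ V).Nonempty := by
  let F : Option ι → Set X := fun o => o.elim Vᶜ fun i => closure (C i)
  have hF_closed : ∀ o, IsClosed (F o) := by
    rintro (_ | i)
    · exact hV.isClosed_compl
    · exact isClosed_closure
  have hF_cover : ⋃ o, F o = univ := by
    refine eq_univ_of_forall fun z => ?_
    by_cases hz : z ∈ V
    · obtain ⟨i, hi⟩ := mem_iUnion.1 (hVC hz)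
      exact mem_iUnion.2 ⟨some i, subset_closure hi⟩
    · exact mem_iUnion.2 ⟨none, hz⟩
  obtain ⟨z, hzF, hzV⟩ :=
    (dense_iUnion_interior_of_closed hF_closed hF_cover).exists_mem_open hV hVne
  obtain ⟨_ | i, hz⟩ := mem_iUnion.1 hzF
  · exact absurd hzV (interior_subset hz)
  · exact ⟨i, z, hz, hzV⟩

section PiecewiseLinear

variable {E ι : Type*} [AddCommGroup E] [Module ℝ E] [TopologicalSpace E]
  {U : Set E} {f : E → ℝ}

def PiecewiseOn (f : E → ℝ) (g : ι → E →L[ℝ] ℝ) (U : Set E) : Prop :=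
  ∀ x ∈ U, ∃ i, f x = g i x

theorem le_of_superadditive_of_eqOn [ContinuousAdd E] [ContinuousSMul ℝ E] {ℓ : E →L[ℝ] ℝ}
    (hcone : ∀ x ∈ U, ∀ t : ℝ, 0 < t → t • x ∈ U)
    (hhom : ∀ x ∈ U, ∀ t : ℝ, 0 < t → f (t • x) = t * f x)
    (hsup : ∀ x ∈ U, ∀ y ∈ U, f x + f y ≤ f (x + y)) {V : Set E} (hV : IsOpen V)
    (hVU : V ⊆ U) (hVne : V.Nonempty) (hfV : EqOn f ℓ V) {x : E} (hx : x ∈ U) :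
    f x ≤ ℓ x := by
  obtain ⟨y, hy⟩ := hVne
  have hray : ∀ᶠ t in 𝓝[>] (0 : ℝ), y + t • x ∈ V := by
    have hcont : Continuous fun t : ℝ => y + t • x :=
      continuous_const.add (continuous_id.smul continuous_const)
    exact ((hcont.tendsto' 0 y (by simp)).eventually (hV.mem_nhds hy)).filter_mono
      nhdsWithin_le_nhds
  obtain ⟨t, hyt, ht⟩ := (hray.and self_mem_nhdsWithin).exists
  have ht' : 0 < t⁻¹ := inv_pos.2 ht
  have hsplit : t⁻¹ • y + x = t⁻¹ • (y + t • x) := by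
    rw [smul_add, smul_smul, inv_mul_cancel₀ ht.ne', one_smul]
  calc f x = f (t⁻¹ • y) + f x - t⁻¹ * ℓ y := by rw [hhom y (hVU hy) _ ht', hfV hy]; ring
    _ ≤ f (t⁻¹ • (y + t • x)) - t⁻¹ * ℓ y := by
      rw [← hsplit]; gcongr; exact hsup _ (hcone y (hVU hy) _ ht') _ hx
    _ = ℓ x := by
      rw [hhom _ (hVU hyt) _ ht', hfV hyt, map_add, map_smul, smul_eq_mul]
      field_simp
      ring

namespace PiecewiseOn

variable {g : ι → E →L[ℝ] ℝ}

theorem apply_smul_eq_mul [ContinuousSMul ℝ E] [Finite ι] (h : PiecewiseOn f g U)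
    (hcone : ∀ x ∈ U, ∀ t : ℝ, 0 < t → t • x ∈ U) (hf : ContinuousOn f U) :
    ∀ x ∈ U, ∀ t : ℝ, 0 < t → f (t • x) = t * f x := by
  intro x hx t ht
  have hslope : f (t • x) / t = f ((1 : ℝ) • x) / 1 := by
    refine isPreconnected_Ioi.constant_of_mapsTo (finite_range fun i => g i x).isDiscrete
      ((hf.comp (continuous_id.smul continuous_const).continuousOn
        fun s hs => hcone x hx s hs).div continuousOn_id fun s hs => ne_of_gt hs)
      (fun s hs => ?_) ht (mem_Ioi.2 one_pos)
    obtain ⟨i, hi⟩ := h _ (hcone x hx s hs)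
    refine ⟨i, show g i x = f (s • x) / s from ?_⟩
    rw [hi, _root_.map_smul, smul_eq_mul, mul_div_cancel_left₀ _ (ne_of_gt hs)]
  rw [one_smul, div_one, div_eq_iff ht.ne'] at hslope
  linarith

theorem exists_eqOn [BaireSpace E] [Countable ι] (h : PiecewiseOn f g U)
    (hf : ContinuousOn f U) {V : Set E} (hV : IsOpen V) (hVne : V.Nonempty) (hVU : V ⊆ U) :
    ∃ i, ∃ W ⊆ V, IsOpen W ∧ W.Nonempty ∧ EqOn f (g i) W := by
  let C : ι → Set E := fun i => {z | f z = g i z}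
  obtain ⟨i, hi⟩ := hV.exists_interior_closure_inter_nonempty hVne fun z hz =>
    mem_iUnion.2 (h z (hVU hz))
  set W := interior (closure (C i)) ∩ V
  have hW : IsOpen W := isOpen_interior.inter hV
  refine ⟨i, W, inter_subset_right, hW, hi, ?_⟩
  exact EqOn.of_subset_closure (s := W ∩ C i) (fun z hz => hz.2)
    ((hf.mono hVU).mono inter_subset_right) (g i).continuous.continuousOn inter_subset_left
    fun z hz => hW.inter_closure ⟨hz, interior_subset hz.1⟩

theorem exists_eq_inf' [ContinuousAdd E] [ContinuousSMul ℝ E] [BaireSpace E] [Fintype ι]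
    (h : PiecewiseOn f g U) (hU : IsOpen U) (hUne : U.Nonempty)
    (hcone : ∀ x ∈ U, ∀ t : ℝ, 0 < t → t • x ∈ U) (hf : ContinuousOn f U)
    (hsup : ∀ x ∈ U, ∀ y ∈ U, f x + f y ≤ f (x + y)) :
    ∃ (s : Finset ι) (hs : s.Nonempty), ∀ x ∈ U, f x = s.inf' hs fun i => g i x := by
  classical
  let s := univ.filter fun i => ∃ W ⊆ U, IsOpen W ∧ W.Nonempty ∧ EqOn f (g i) W
  have hs : s.Nonempty := by
    obtain ⟨i, hi⟩ := h.exists_eqOn hf hU hUne subset_rfl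
    exact ⟨i, mem_filter.2 ⟨mem_univ i, hi⟩⟩
  let m : E → ℝ := fun x => s.inf' hs fun i => g i x
  have hle : ∀ x ∈ U, f x ≤ m x := fun x hx => le_inf' hs _ fun i hi => by
    obtain ⟨W, hWU, hW, hWne, hfW⟩ := (mem_filter.1 hi).2
    exact le_of_superadditive_of_eqOn hcone (h.apply_smul_eq_mul hcone hf) hsup hW hWU hWne hfW hx
  refine ⟨s, hs, fun x hx => (hle x hx).antisymm ?_⟩
  by_contra! hlt
  let B := U ∩ (fun z => f z - m z) ⁻¹' Iio 0
  have hB : IsOpen B := (hf.sub (Continuous.finset_inf'_apply hs fun i _ =>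
    (g i).continuous).continuousOn).isOpen_inter_preimage hU isOpen_Iio
  obtain ⟨i, W, hWB, hW, ⟨z, hz⟩, hfW⟩ :=
    h.exists_eqOn hf hB ⟨x, hx, sub_neg.2 hlt⟩ inter_subset_left
  have hi : i ∈ s := mem_filter.2 ⟨mem_univ i, W, hWB.trans inter_subset_left, hW, ⟨z, hz⟩, hfW⟩
  have hfz : f z < m z := sub_neg.1 (hWB hz).2
  have hmz : m z ≤ g i z := inf'_le _ hi
  linarith [hfW hz]

end PiecewiseOn

end PiecewiseLinear

theorem Finset.inf'_eq_inf'_univ_ite {ι α : Type*} [Fintype ι] [Nonempty ι] [SemilatticeInf α]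
    [DecidableEq ι] {s : Finset ι} {i₀ : ι} (hi₀ : i₀ ∈ s) (F : ι → α) :
    s.inf' ⟨i₀, hi₀⟩ F = univ.inf' univ_nonempty fun i => F (if i ∈ s then i else i₀) := by
  refine le_antisymm (le_inf' _ _ fun i _ => ?_) (le_inf' _ _ fun i hi => ?_)
  · split_ifs with hi
    · exact inf'_le F hi
    · exact inf'_le F hi₀
  · simpa [hi] using inf'_le (fun i => F (if i ∈ s then i else i₀)) (mem_univ i)

theorem superadditive_pw_linear_eq_min_general (n m : ℕ) (f : (Fin n → ℝ) → ℝ)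
    (a : Fin (m + 1) → Fin n → ℚ) (D : Fin (m + 1) → Set (Fin n → ℝ))
    (hcover : {x : Fin n → ℝ | ∀ j, 0 < x j} ⊆ ⋃ i, D i)
    (hpiece : ∀ i, ∀ x ∈ D i, f x = ∑ j, (a i j : ℝ) * x j)
    (hcont : ContinuousOn f {x : Fin n → ℝ | ∀ j, 0 < x j})
    (hsup : ∀ x y : Fin n → ℝ, (∀ j, 0 < x j) → (∀ j, 0 < y j) → f x + f y ≤ f (x + y)) :
    ∃ (k : ℕ) (b : Fin (k + 1) → Fin n → ℚ),
      ∀ x : Fin n → ℝ, (∀ j, 0 < x j) →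
        f x = Finset.univ.inf' Finset.univ_nonempty
          (fun i : Fin (k + 1) => ∑ j, (b i j : ℝ) * x j) := by
  let g : Fin (m + 1) → (Fin n → ℝ) →L[ℝ] ℝ :=
    fun i => ∑ j, (a i j : ℝ) • ContinuousLinearMap.proj j
  have hg : ∀ i x, g i x = ∑ j, (a i j : ℝ) * x j := by simp [g]
  have hU : IsOpen {x : Fin n → ℝ | ∀ j, 0 < x j} := by
    simpa only [ofPred_forall] using
      isOpen_iInter_of_finite fun j => isOpen_lt continuous_const (continuous_apply j)
  have hpw : PiecewiseOn f g {x | ∀ j, 0 < x j} := fun x hx => by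
    obtain ⟨i, hi⟩ := mem_iUnion.1 (hcover hx)
    exact ⟨i, (hpiece i x hi).trans (hg i x).symm⟩
  obtain ⟨s, ⟨i₀, hi₀⟩, hs⟩ := hpw.exists_eq_inf' hU ⟨1, fun _ => one_pos⟩
    (fun x hx t ht j => mul_pos ht (hx j)) hcont fun x hx y hy => hsup x y hx hy
  refine ⟨m, fun i => a (if i ∈ s then i else i₀), fun x hx => ?_⟩
  rw [hs x hx, inf'_eq_inf'_univ_ite hi₀]
  simp only [hg]

/-- Any superadditive continuous piecewise rational linear function on the positive
orthant equals the pointwise minimum of finitely many rational linear functions. -/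
theorem superadditive_pw_linear_eq_min (n m : ℕ) (f : (Fin n → ℝ) → ℝ)
    (a : Fin (m + 1) → Fin n → ℚ) (D : Fin (m + 1) → Set (Fin n → ℝ))
    (hDsub : ∀ i, D i ⊆ {x : Fin n → ℝ | ∀ j, 0 < x j})
    (hcover : {x : Fin n → ℝ | ∀ j, 0 < x j} ⊆ ⋃ i, D i)
    (hpiece : ∀ i, ∀ x ∈ D i, f x = ∑ j, (a i j : ℝ) * x j)
    (hcont : ContinuousOn f {x : Fin n → ℝ | ∀ j, 0 < x j})
    (hsup : ∀ x y : Fin n → ℝ, (∀ j, 0 < x j) → (∀ j, 0 < y j) → f x + f y ≤ f (x + y)) :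
    ∃ (k : ℕ) (b : Fin (k + 1) → Fin n → ℚ),
      ∀ x : Fin n → ℝ, (∀ j, 0 < x j) →
        f x = Finset.univ.inf' Finset.univ_nonempty
          (fun i : Fin (k + 1) => ∑ j, (b i j : ℝ) * x j) :=
  superadditive_pw_linear_eq_min_general n m f a D hcover hpiece hcont hsup
end

section
/- Let f : R_{\geq 0}^n \to R_{\geq 0} be superadditive and positive-continuous, and for each S \subseteq [n] let g_S be the continuous function agreeing with f on the domain D_S of vectors whose set of positive coordinates is exactly S. If S \subseteq T \subseteq [n], then for all x \in D_S, g_S(x) \leq g_T(x). -/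
/-!
Superadditivity together with nonnegativity makes `f` monotone: `f x ≤ f x + f y ≤ f (x + y)`.
Push `x ∈ D_S` into `D_T` by adding `ε` on the coordinates of `T \ S`; there `f = g_T`, so
`g_S x = f x ≤ g_T (x + ε • 𝟙_{T \ S})`, and letting `ε → 0⁺` the continuity of `g_T` gives the claim.
-/

open Filter Topology Set

lemma le_map_add_of_superadditive {M : Type*} [Add M] {P : M → Prop} {f : M → ℝ}
    (hnn : ∀ x, P x → 0 ≤ f x) (hsup : ∀ a b, P a → P b → f a + f b ≤ f (a + b))
    {a b : M} (ha : P a) (hb : P b) : f a ≤ f (a + b) := by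
  linarith [hnn b hb, hsup a b ha hb]

lemma le_of_forall_pos_le_add_smul {E : Type*} [TopologicalSpace E] [AddCommGroup E]
    [Module ℝ E] [ContinuousAdd E] [ContinuousSMul ℝ E] {g : E → ℝ} {s : Set E} {x v : E}
    {a : ℝ} (hg : ContinuousWithinAt g s x) (hs : ∀ ε : ℝ, 0 < ε → x + ε • v ∈ s)
    (ha : ∀ ε : ℝ, 0 < ε → a ≤ g (x + ε • v)) : a ≤ g x := by
  have hline : Continuous fun ε : ℝ => x + ε • v := by fun_prop
  have hpath : Tendsto (fun ε : ℝ => x + ε • v) (𝓝[>] 0) (𝓝[s] x) :=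
    tendsto_nhdsWithin_iff.2 ⟨(hline.tendsto' 0 x (by simp)).mono_left nhdsWithin_le_nhds,
      eventually_nhdsWithin_of_forall hs⟩
  exact ge_of_tendsto (hg.tendsto.comp hpath) (eventually_nhdsWithin_of_forall ha)

lemma pos_add_smul_indicator_diff_iff {ι : Type*} {x : ι → ℝ} {S T : Set ι} {ε : ℝ}
    (hx : ∀ i, 0 ≤ x i) (hxS : ∀ i, 0 < x i ↔ i ∈ S) (hST : S ⊆ T) (hε : 0 < ε) (i : ι) :
    0 < (x + ε • (T \ S).indicator (1 : ι → ℝ)) i ↔ i ∈ T := by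
  by_cases hiS : i ∈ S
  · simp [hiS, hST hiS, (hxS i).2 hiS]
  · have hxi : x i = 0 := le_antisymm (not_lt.1 (mt (hxS i).1 hiS)) (hx i)
    by_cases hiT : i ∈ T <;> simp [indicator, hiS, hiT, hxi, hε]

/-- Domain inequality: for a superadditive, nonnegative, positive-continuous function
`f` with continuous extensions `g S` on each domain `D_S`, if `S ⊆ T` then
`g S x ≤ g T x` for every `x ∈ D_S`. -/
theorem domain_inequality (n : ℕ) (f : (Fin n → ℝ) → ℝ)
    (g : Set (Fin n) → (Fin n → ℝ) → ℝ)
    (hnn : ∀ x : Fin n → ℝ, (∀ i, 0 ≤ x i) → 0 ≤ f x)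
    (hsup : ∀ a b : Fin n → ℝ, (∀ i, 0 ≤ a i) → (∀ i, 0 ≤ b i) → f a + f b ≤ f (a + b))
    (hgcont : ∀ S, ContinuousOn (g S) {x : Fin n → ℝ | ∀ i, 0 ≤ x i})
    (hfg : ∀ (S : Set (Fin n)) (x : Fin n → ℝ), (∀ i, 0 ≤ x i) →
      (∀ i, 0 < x i ↔ i ∈ S) → f x = g S x)
    (S T : Set (Fin n)) (hST : S ⊆ T)
    (x : Fin n → ℝ) (hx : ∀ i, 0 ≤ x i) (hxS : ∀ i, 0 < x i ↔ i ∈ S) :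
    g S x ≤ g T x := by
  set v : Fin n → ℝ := (T \ S).indicator 1
  have hbump : ∀ ε : ℝ, 0 < ε → ∀ i, 0 ≤ (ε • v) i := fun ε hε i =>
    mul_nonneg hε.le (indicator_nonneg (fun _ _ => zero_le_one) i)
  have hpert : ∀ ε : ℝ, 0 < ε → ∀ i, 0 ≤ (x + ε • v) i := fun ε hε i =>
    add_nonneg (hx i) (hbump ε hε i)
  rw [← hfg S x hx hxS]
  refine le_of_forall_pos_le_add_smul (hgcont T x hx) hpert fun ε hε => ?_
  rw [← hfg T _ (hpert ε hε) (pos_add_smul_indicator_diff_iff hx hxS hST hε)]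
  exact le_map_add_of_superadditive hnn hsup hx (hbump ε hε)
end

section
/- Let f : R_{\geq 0}^n \to R_{\geq 0} be superadditive positive-continuous piecewise rational linear, with g_S the continuous extension of f restricted to domain D_S for each S \subseteq [n], and P_K(x) = 1 if x(i) > 0 for all i \in K and 0 otherwise. Then f(x) = min over S \subseteq [n] of [ g_S(x) + \sum_{K \not\subseteq S} P_K(x) g_K(x) ]. -/
/-!
At `x`, let `I` be the set of positive coordinates, so `f x = g_I x` and `P_K x = 1` exactly for
`K ⊆ I`. Taking `S = I` makes the penalty sum vanish, so the minimum is at most `g_I x`. For any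
other `S`: if `I ⊆ S` the penalty sum vanishes again and `g_I x ≤ g_S x` by the domain inequality;
if `I ⊄ S`, the term `K = I` of the penalty sum already contributes `g_I x`.
-/

open Finset

namespace MinOverDomains

variable {ι : Type*} [Fintype ι]

noncomputable def posSupport (x : ι → ℝ) : Finset ι := univ.filter (0 < x ·)

@[simp]
theorem mem_posSupport {x : ι → ℝ} {i : ι} : i ∈ posSupport x ↔ 0 < x i := by
  simp [posSupport]

theorem forall_pos_iff_subset_posSupport {x : ι → ℝ} {K : Finset ι} :
    (∀ i ∈ K, 0 < x i) ↔ K ⊆ posSupport x := by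
  simp only [subset_iff, mem_posSupport]

variable [DecidableEq ι] {P : Finset ι → Prop} [DecidablePred P] {I S : Finset ι}
  {g : Finset ι → ℝ}

theorem sum_not_subset_indicator_eq_zero (hP : ∀ K, P K → K ⊆ I) (hIS : I ⊆ S) :
    ∑ K ∈ univ.filter (fun K => ¬ K ⊆ S), (if P K then (1 : ℝ) else 0) * g K = 0 := by
  refine sum_eq_zero fun K hK => ?_
  have hKS : ¬ K ⊆ S := (mem_filter.mp hK).2
  rw [if_neg fun hPK => hKS ((hP K hPK).trans hIS), zero_mul]

theorem le_sum_not_subset_indicator (hg : ∀ K, 0 ≤ g K) (hPI : P I) (hIS : ¬ I ⊆ S) :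
    g I ≤ ∑ K ∈ univ.filter (fun K => ¬ K ⊆ S), (if P K then (1 : ℝ) else 0) * g K := by
  have hmem : I ∈ univ.filter (fun K => ¬ K ⊆ S) := mem_filter.mpr ⟨mem_univ I, hIS⟩
  calc g I = (if P I then (1 : ℝ) else 0) * g I := by rw [if_pos hPI, one_mul]
    _ ≤ _ := single_le_sum (f := fun K => (if P K then (1 : ℝ) else 0) * g K)
        (fun K _ => mul_nonneg (ite_nonneg zero_le_one le_rfl) (hg K)) hmem

end MinOverDomains

open MinOverDomains

open Classical in
/-- A superadditive positive-continuous piecewise rational linear function equals the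
minimum over `S ⊆ [n]` of `g_S(x) + ∑_{K ⊄ S} P_K(x) g_K(x)`. -/
theorem min_over_domains (n : ℕ) (f : (Fin n → ℝ) → ℝ)
    (g : Finset (Fin n) → (Fin n → ℝ) → ℝ)
    (hgnn : ∀ S x, 0 ≤ g S x)
    (hfg : ∀ (S : Finset (Fin n)) (x : Fin n → ℝ), (∀ i, 0 ≤ x i) →
      (∀ i, 0 < x i ↔ i ∈ S) → f x = g S x)
    (hdom : ∀ S T : Finset (Fin n), S ⊆ T → ∀ x : Fin n → ℝ, (∀ i, 0 ≤ x i) →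
      (∀ i, 0 < x i ↔ i ∈ S) → g S x ≤ g T x) :
    ∀ x : Fin n → ℝ, (∀ i, 0 ≤ x i) →
      f x = Finset.univ.inf' Finset.univ_nonempty (fun S : Finset (Fin n) =>
        g S x + ∑ K ∈ Finset.univ.filter (fun K : Finset (Fin n) => ¬ K ⊆ S),
          (if ∀ i ∈ K, 0 < x i then (1 : ℝ) else 0) * g K x) := by
  intro x hx
  set I := posSupport x
  have hI : ∀ i, 0 < x i ↔ i ∈ I := fun i => mem_posSupport.symm
  have hP : ∀ K : Finset (Fin n), (∀ i ∈ K, 0 < x i) → K ⊆ I :=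
    fun K => forall_pos_iff_subset_posSupport.mp
  rw [hfg I x hx hI]
  refine le_antisymm (le_inf' _ _ fun S _ => ?_) ((inf'_le _ (mem_univ I)).trans_eq ?_)
  · by_cases hIS : I ⊆ S
    · rw [sum_not_subset_indicator_eq_zero hP hIS, add_zero]
      exact hdom I S hIS x hx hI
    · calc g I x ≤ _ := le_sum_not_subset_indicator (hgnn · x) (fun i => (hI i).mpr) hIS
        _ ≤ _ := le_add_of_nonneg_left (hgnn S x)
  · rw [sum_not_subset_indicator_eq_zero hP subset_rfl, add_zero]
end

section
/- No output-oblivious CRC stably computes f(x1, x2) = max(x1, x2). -/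
open Classical in
/-- Initial state encoding input `x` on the input species `X i`, all other species 0. -/
noncomputable def InitState {σ : Type} {n : ℕ} (X : Fin n → σ) (x : Fin n → ℝ) : σ → ℝ :=
  fun s => ∑ i, if X i = s then x i else 0

/-- A state `o` is output stable if no reachable state changes the output concentration. -/
def OutputStable {σ ρ : Type} [Fintype ρ] (react prod : ρ → σ → ℕ) (Y : σ)
    (o : σ → ℝ) : Prop :=
  ∀ o', Reach react prod o o' → o' Y = o Y

/-- The CRC with input species `X`, output species `Y` stably computes `f`:
from every state reachable from an input state, an output stable state with
output concentration `f x` is reachable. -/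
def StablyComputes {σ ρ : Type} [Fintype ρ] {n : ℕ} (react prod : ρ → σ → ℕ)
    (X : Fin n → σ) (Y : σ) (f : (Fin n → ℝ) → ℝ) : Prop :=
  ∀ x : Fin n → ℝ, (∀ i, 0 ≤ x i) →
    ∀ c, Reach react prod (InitState X x) c →
      ∃ o, Reach react prod c o ∧ OutputStable react prod Y o ∧ o Y = f x

/-!
Concentrations of a species that is never a reactant can only grow along a trajectory, and
trajectories from two initial states run side by side from their sum. So if the CRC computes `f`
from inputs `x` and `y`, reaching outputs `f x` and `f y`, then from `x + y` it reaches a state with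
output `f x + f y`, which can no longer decrease: `f` is superadditive. For `max` this would give
`1 + 1 ≤ max 1 1`.
-/

variable {σ ρ : Type} [Fintype ρ] {react prod : ρ → σ → ℕ}

namespace Reach

theorem nonneg_s17 {c d : σ → ℝ} (h : Reach react prod c d) (hc : 0 ≤ c) : 0 ≤ d := by
  induction h with
  | refl => exact hc
  | tail _ hstep _ =>
    obtain ⟨u, -, -, hd, -⟩ := hstep
    exact hd

theorem apply_le_apply_of_not_reactant {s : σ} (hs : ∀ r, react r s = 0) {c d : σ → ℝ}
    (h : Reach react prod c d) : c s ≤ d s := by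
  induction h with
  | refl => exact le_rfl
  | tail _ hstep ih =>
    obtain ⟨u, hu, -, -, hd⟩ := hstep
    have hact : 0 ≤ StoichAct react prod u s :=
      Finset.sum_nonneg fun r _ => by simp [hs r, mul_nonneg (hu r)]
    linarith [hd s]

theorem add_right {c d : σ → ℝ} (h : Reach react prod c d) {e : σ → ℝ} (he : 0 ≤ e) :
    Reach react prod (c + e) (d + e) := by
  induction h with
  | refl => exact Relation.ReflTransGen.refl
  | tail _ hstep ih =>
    obtain ⟨u, hu, happ, hd, hact⟩ := hstep
    refine ih.tail ⟨u, hu, fun r hr s hs => ?_, add_nonneg hd he, fun s => ?_⟩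
    · exact add_pos_of_pos_of_nonneg (happ r hr s hs) (he s)
    · simp only [Pi.add_apply, hact s]
      ring

theorem add {c c' d d' : σ → ℝ} (hc : Reach react prod c c') (hd : Reach react prod d d')
    (hc0 : 0 ≤ c) (hd0 : 0 ≤ d) : Reach react prod (c + d) (c' + d') := by
  have hleft : Reach react prod (c + d) (c' + d) := hc.add_right hd0
  have hright : Reach react prod (d + c') (d' + c') := hd.add_right (hc.nonneg_s17 hc0)
  rw [add_comm d, add_comm d'] at hright
  exact hleft.trans hright

end Reach

theorem InitState_add {n : ℕ} (X : Fin n → σ) (x y : Fin n → ℝ) :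
    InitState X (x + y) = InitState X x + InitState X y := by
  ext s
  simp only [InitState, Pi.add_apply, ← Finset.sum_add_distrib]
  refine Finset.sum_congr rfl fun i _ => ?_
  split_ifs <;> simp

theorem InitState_nonneg {n : ℕ} (X : Fin n → σ) {x : Fin n → ℝ} (hx : 0 ≤ x) :
    0 ≤ InitState X x := fun s =>
  Finset.sum_nonneg fun i _ => by split_ifs; exacts [hx i, le_rfl]

theorem StablyComputes.superadditive {n : ℕ} {X : Fin n → σ} {Y : σ}
    {f : (Fin n → ℝ) → ℝ} (hf : StablyComputes react prod X Y f) (hY : ∀ r, react r Y = 0)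
    {x y : Fin n → ℝ} (hx : 0 ≤ x) (hy : 0 ≤ y) : f x + f y ≤ f (x + y) := by
  obtain ⟨ox, hox, -, hoxY⟩ := hf x hx _ Relation.ReflTransGen.refl
  obtain ⟨oy, hoy, -, hoyY⟩ := hf y hy _ Relation.ReflTransGen.refl
  have hsum : Reach react prod (InitState X (x + y)) (ox + oy) := by
    rw [InitState_add]
    exact hox.add hoy (InitState_nonneg X hx) (InitState_nonneg X hy)
  obtain ⟨o, ho, -, hoY⟩ := hf (x + y) (add_nonneg hx hy) _ hsum
  calc f x + f y = (ox + oy) Y := by simp [hoxY, hoyY]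
    _ ≤ o Y := ho.apply_le_apply_of_not_reactant hY
    _ = f (x + y) := hoY

theorem no_output_oblivious_max_general (σ ρ : Type) [Fintype ρ]
    (react prod : ρ → σ → ℕ) (X : Fin 2 → σ)
    (Y : σ)
    (hob : ∀ r, react r Y = 0) :
    ¬ StablyComputes react prod X Y (fun x => max (x 0) (x 1)) := by
  intro hmax
  have h := hmax.superadditive hob (x := ![1, 0]) (y := ![0, 1])
    (fun i => by fin_cases i <;> simp) (fun i => by fin_cases i <;> simp)
  norm_num at h

/-- No output-oblivious CRC stably computes `max`. -/
theorem no_output_oblivious_max (σ ρ : Type) [Fintype ρ]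
    (react prod : ρ → σ → ℕ) (X : Fin 2 → σ) (hX : Function.Injective X)
    (Y : σ) (hY : Y ∉ Set.range X)
    (hob : ∀ r, react r Y = 0) :
    ¬ StablyComputes react prod X Y (fun x => max (x 0) (x 1)) :=
  no_output_oblivious_max_general σ ρ react prod X Y hob
end
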